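/- Let K ∈ M_{N,n}(ℂ) be such that K σ K† is diagonal for every diagonal density matrix σ ∈ I_n. Then every column of K has at most one nonzero entry; equivalently, there exist a map σ : {1,…,n} → {1,…,N} and scalars c_1,…,c_n ∈ ℂ such that K e_j = c_j e_{σ(j)} for all j, where e_j denotes the standard basis vector. -/

import Mathlib

open scoped ENNReal ComplexOrder
open Matrix

noncomputable section

/-- The `ℓ_p` norm of a complex vector, `p ∈ [1,∞]`. -/
def lpV (p : ℝ≥0∞) {n : ℕ} (v : Fin n → ℂ) : ℝ :=
  if p = ∞ then ⨆ i, ‖v i‖ else (∑ i, ‖v i‖ ^ p.toReal) ^ (1 / p.toReal)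

/-- The `ℓ_{q,p}` norm of a complex matrix: the `ℓ_q` norm of the vector of
`ℓ_p` norms of its columns. -/
def lqp (q p : ℝ≥0∞) {m n : ℕ} (A : Matrix (Fin m) (Fin n) ℂ) : ℝ :=
  lpV q fun j => ((lpV p fun i => A i j : ℝ) : ℂ)

/-- A density matrix: positive semidefinite with trace one. -/
def IsDensity {n : ℕ} (ρ : Matrix (Fin n) (Fin n) ℂ) : Prop :=
  ρ.PosSemidef ∧ ρ.trace = 1

/-- An incoherent (classical) state: a diagonal density matrix. -/
def IsIncoherentState {n : ℕ} (ρ : Matrix (Fin n) (Fin n) ℂ) : Prop :=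
  IsDensity ρ ∧ ρ.IsDiag

/-- `C_ν(ρ) = min {ν(ρ - σ) : σ ∈ I_n}` (as an infimum). -/
def distC {n : ℕ} (ν : Matrix (Fin n) (Fin n) ℂ → ℝ) (ρ : Matrix (Fin n) (Fin n) ℂ) : ℝ :=
  sInf {x | ∃ σ, IsIncoherentState σ ∧ x = ν (ρ - σ)}

/-- A set of incoherent Kraus operators `K_j : M_{m,n}`:
`∑ K_j† K_j = I` and each `K_j σ K_j†` is diagonal for diagonal densities `σ`. -/
def IsIncoherentKraus {m n r : ℕ} (K : Fin r → Matrix (Fin m) (Fin n) ℂ) : Prop :=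
  (∑ j, (K j)ᴴ * K j) = 1 ∧
  ∀ j (σ : Matrix (Fin n) (Fin n) ℂ), IsIncoherentState σ → (K j * σ * (K j)ᴴ).IsDiag

/-- A family of candidate coherence measures, one for each dimension. -/
abbrev CFam := ∀ n : ℕ, Matrix (Fin n) (Fin n) ℂ → ℝ

/-- Condition (B1) = (C1): nonnegativity, vanishing exactly on incoherent states. -/
def CondB1 (C : CFam) : Prop :=
  ∀ n (ρ : Matrix (Fin n) (Fin n) ℂ), IsDensity ρ →
    0 ≤ C n ρ ∧ (C n ρ = 0 ↔ IsIncoherentState ρ)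

/-- Condition (B2) = (C2): monotonicity under incoherent operations. -/
def CondB2 (C : CFam) : Prop :=
  ∀ (n m r : ℕ) (K : Fin r → Matrix (Fin m) (Fin n) ℂ), IsIncoherentKraus K →
    ∀ ρ, IsDensity ρ → C m (∑ j, K j * ρ * (K j)ᴴ) ≤ C n ρ

/-- Condition (B3): monotonicity on average under selective incoherent operations. -/
def CondB3 (C : CFam) : Prop :=
  ∀ (n m r : ℕ) (K : Fin r → Matrix (Fin m) (Fin n) ℂ), IsIncoherentKraus K →
    ∀ ρ, IsDensity ρ →
      ∑ j, ((K j * ρ * (K j)ᴴ).trace).re *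
          C m (((((K j * ρ * (K j)ᴴ).trace).re)⁻¹ : ℂ) • (K j * ρ * (K j)ᴴ)) ≤ C n ρ

/-- Condition (B4): convexity. -/
def CondB4 (C : CFam) : Prop :=
  ∀ (n r : ℕ) (ρ : Fin r → Matrix (Fin n) (Fin n) ℂ) (p : Fin r → ℝ),
    (∀ j, IsDensity (ρ j)) → (∀ j, 0 ≤ p j) → (∑ j, p j) = 1 →
    C n (∑ j, (p j : ℂ) • ρ j) ≤ ∑ j, p j * C n (ρ j)

/-- Block diagonal direct sum of two square matrices, reindexed to `Fin (n₁ + n₂)`. -/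
def dirSum {n₁ n₂ : ℕ} (A : Matrix (Fin n₁) (Fin n₁) ℂ) (B : Matrix (Fin n₂) (Fin n₂) ℂ) :
    Matrix (Fin (n₁ + n₂)) (Fin (n₁ + n₂)) ℂ :=
  (Matrix.fromBlocks A 0 0 B).submatrix finSumFinEquiv.symm finSumFinEquiv.symm

/-- Condition (C3): additivity under direct sum convex combinations. -/
def CondC3 (C : CFam) : Prop :=
  ∀ (n₁ n₂ : ℕ) (ρ₁ : Matrix (Fin n₁) (Fin n₁) ℂ) (ρ₂ : Matrix (Fin n₂) (Fin n₂) ℂ)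
    (p₁ p₂ : ℝ), IsDensity ρ₁ → IsDensity ρ₂ → 0 ≤ p₁ → 0 ≤ p₂ → p₁ + p₂ = 1 →
    C (n₁ + n₂) (dirSum ((p₁ : ℂ) • ρ₁) ((p₂ : ℂ) • ρ₂)) = p₁ * C n₁ ρ₁ + p₂ * C n₂ ρ₂

/-- A norm on `M_n(ℂ)` (nonnegativity is automatic). -/
def IsMatrixNorm {n : ℕ} (ν : Matrix (Fin n) (Fin n) ℂ → ℝ) : Prop :=
  (∀ A, ν A = 0 ↔ A = 0) ∧ (∀ (c : ℂ) A, ν (c • A) = ‖c‖ * ν A) ∧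
  (∀ A B, ν (A + B) ≤ ν A + ν B)


theorem isIncoherentState_diagonal_single {n : ℕ} (j : Fin n) :
    IsIncoherentState (diagonal (Pi.single j 1 : Fin n → ℂ)) := by
  refine ⟨⟨posSemidef_diagonal_iff.2 fun a => ?_, ?_⟩, isDiag_diagonal _⟩
  · rcases eq_or_ne a j with rfl | h <;> simp [*]
  · simp [trace_diagonal]

theorem mul_diagonal_single_mul_conjTranspose_apply {m n α : Type*} [Fintype n] [DecidableEq n]
    [Semiring α] [StarRing α] (K : Matrix m n α) (j : n) (i₁ i₂ : m) :
    (K * diagonal (Pi.single j (1 : α)) * Kᴴ) i₁ i₂ = K i₁ j * star (K i₂ j) := by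
  rw [mul_apply]
  simp [mul_diagonal, Pi.single_apply]

/-- Feeding the basis state `e_j e_jᴴ` through `K` gives the rank-one matrix `(K e_j)(K e_j)ᴴ`,
whose off-diagonal entries are products of entries of the `j`-th column. -/
theorem eq_of_ne_zero_of_ne_zero_of_forall_isDiag {N n : ℕ} {K : Matrix (Fin N) (Fin n) ℂ}
    (hK : ∀ σ : Matrix (Fin n) (Fin n) ℂ, IsIncoherentState σ → (K * σ * Kᴴ).IsDiag)
    {j : Fin n} {i₁ i₂ : Fin N} (h₁ : K i₁ j ≠ 0) (h₂ : K i₂ j ≠ 0) : i₁ = i₂ := by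
  by_contra hne
  have hentry : (K * diagonal (Pi.single j (1 : ℂ)) * Kᴴ) i₁ i₂ = 0 :=
    hK _ (isIncoherentState_diagonal_single j) hne
  rw [mul_diagonal_single_mul_conjTranspose_apply] at hentry
  exact mul_ne_zero h₁ (star_ne_zero.2 h₂) hentry

theorem exists_eq_ite_of_column_subsingleton {m n α : Type*} [DecidableEq m] [Nonempty m]
    [Zero α] {A : Matrix m n α} (hA : ∀ j i₁ i₂, A i₁ j ≠ 0 → A i₂ j ≠ 0 → i₁ = i₂) :
    ∃ (f : n → m) (c : n → α), ∀ j i, A i j = if i = f j then c j else 0 := by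
  classical
  let f j : m := if h : ∃ i, A i j ≠ 0 then h.choose else Classical.arbitrary m
  refine ⟨f, fun j => A (f j) j, fun j i => ?_⟩
  split_ifs with hi
  · rw [hi]
  · by_contra hAij
    have hex : ∃ i, A i j ≠ 0 := ⟨i, hAij⟩
    have hf : f j = hex.choose := dif_pos hex
    exact hi (hA j i (f j) hAij (hf ▸ hex.choose_spec))

/-- if `K ∈ M_{N,n}(ℂ)` satisfies `K σ K†` diagonal for every diagonal
density matrix `σ`, then every column of `K` has at most one nonzero entry; equivalently
(when `N ≥ 1`), `K e_j = c_j e_{f(j)}` for a map `f : {1,…,n} → {1,…,N}` and scalars `c_j`. -/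
theorem kraus_columns_single_entry (N n : ℕ) (K : Matrix (Fin N) (Fin n) ℂ)
    (hK : ∀ σ : Matrix (Fin n) (Fin n) ℂ, IsIncoherentState σ → (K * σ * Kᴴ).IsDiag) :
    (∀ (j : Fin n) (i₁ i₂ : Fin N), K i₁ j ≠ 0 → K i₂ j ≠ 0 → i₁ = i₂) ∧
    (0 < N → ∃ (f : Fin n → Fin N) (c : Fin n → ℂ),
      ∀ (j : Fin n) (i : Fin N), K i j = if i = f j then c j else 0) := by
  have hcol : ∀ (j : Fin n) (i₁ i₂ : Fin N), K i₁ j ≠ 0 → K i₂ j ≠ 0 → i₁ = i₂ :=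
    fun _ _ _ => eq_of_ne_zero_of_ne_zero_of_forall_isDiag hK
  refine ⟨hcol, fun hN => ?_⟩
  have : Nonempty (Fin N) := ⟨⟨0, hN⟩⟩
  exact exists_eq_ite_of_column_subsingleton hcol
end
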